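/- Let r₁,…,r_n ∈ ℝ with r_j < 0 for a unique j and r_i ≥ 0 for i ≠ j (with at least one r_i > 0 for some i ≠ j). Then the region {α ∈ Δ^{n-1} : ∑ᵢ rᵢαᵢ ≤ 0} of the standard simplex is the convex hull of the vertex e_j together with the points p_i = (r_i/(r_i - r_j)) e_j + ((-r_j)/(r_i - r_j)) e_i for each i ≠ j with r_i > 0, and the edges [e_j, e_i] for i with r_i = 0. -/
import Mathlib


/-- With `r j < 0` for a unique `j`, `r i ≥ 0` for `i ≠ j` (and some `r i > 0`),
the region `{α ∈ Δ : ∑ rᵢαᵢ ≤ 0}` of the standard simplex is the convex hull of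
the vertex `e j`, the points `pᵢ = (rᵢ/(rᵢ-r j))·e j + ((-r j)/(rᵢ-r j))·e i`
for `i ≠ j` with `rᵢ > 0`, and the edges `[e j, e i]` for `i ≠ j` with `rᵢ = 0`. -/
theorem toy_model_region_eq_convexHull (n : ℕ) (r : Fin n → ℝ) (j : Fin n)
    (hj : r j < 0) (hpos : ∀ i, i ≠ j → 0 ≤ r i) (hne : ∃ i, i ≠ j ∧ 0 < r i) :
    let e : Fin n → (Fin n → ℝ) := fun i => Pi.single i 1
    let p : Fin n → (Fin n → ℝ) := fun i =>
      (r i / (r i - r j)) • e j + ((-(r j)) / (r i - r j)) • e i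
    {α ∈ stdSimplex ℝ (Fin n) | ∑ i, r i * α i ≤ 0} =
      convexHull ℝ
        ({e j} ∪ {x | ∃ i, i ≠ j ∧ 0 < r i ∧ x = p i} ∪
          ⋃ i ∈ {i | i ≠ j ∧ r i = 0}, segment ℝ (e j) (e i)) := by
  intro e p
  have heq : ∀ i, e i = Pi.single i 1 := fun _ => rfl
  have hpeq : ∀ i, p i = (r i / (r i - r j)) • e j + ((-(r j)) / (r i - r j)) • e i :=
    fun _ => rfl
  set B : ℝ := -(r j) with hBdef
  have hBpos : 0 < B := by simp only [hBdef]; linarith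
  have hBne : B ≠ 0 := ne_of_gt hBpos
  have hrjne : r j ≠ 0 := ne_of_lt hj
  have hd : ∀ i, i ≠ j → 0 < r i - r j := fun i hi => by
    have := hpos i hi; linarith
  -- generators are in the region
  have he_mem : ∀ i, e i ∈ stdSimplex ℝ (Fin n) := by
    intro i
    refine ⟨fun k => ?_, ?_⟩
    · rw [heq]; by_cases h : k = i <;> simp [Pi.single_apply, h]
    · simp [heq, Pi.single_apply]
  have hesum : ∀ i, ∑ k, r k * e i k = r i := by
    intro i
    simp [heq, Pi.single_apply, mul_ite]
  have hp_std : ∀ i, i ≠ j → p i ∈ stdSimplex ℝ (Fin n) := by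
    intro i hi
    have hdi := hd i hi
    have hri := hpos i hi
    refine ⟨fun k => ?_, ?_⟩
    · rw [hpeq]
      have h1 : (0:ℝ) ≤ (r i / (r i - r j)) := by positivity
      have h2 : (0:ℝ) ≤ (-(r j) / (r i - r j)) := by
        apply div_nonneg _ hdi.le; linarith
      have := (he_mem j).1 k
      have := (he_mem i).1 k
      simp only [Pi.add_apply, Pi.smul_apply, smul_eq_mul]
      positivity
    · rw [hpeq]
      simp only [Pi.add_apply, Pi.smul_apply, smul_eq_mul]
      rw [Finset.sum_add_distrib, ← Finset.mul_sum, ← Finset.mul_sum,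
        (he_mem j).2, (he_mem i).2]
      field_simp
      rw [hBdef]; ring
  have hp_sum : ∀ i, i ≠ j → ∑ k, r k * p i k = 0 := by
    intro i hi
    have hdi := hd i hi
    rw [hpeq]
    simp only [Pi.add_apply, Pi.smul_apply, smul_eq_mul]
    have : ∀ k, r k * (r i / (r i - r j) * e j k + -r j / (r i - r j) * e i k)
        = (r i / (r i - r j)) * (r k * e j k) + (-r j / (r i - r j)) * (r k * e i k) := by
      intro k; ring
    rw [Finset.sum_congr rfl fun k _ => this k, Finset.sum_add_distrib,
      ← Finset.mul_sum, ← Finset.mul_sum, hesum, hesum]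
    field_simp
    ring
  -- the region is convex
  have hlin : IsLinearMap ℝ (fun x : Fin n → ℝ => ∑ i, r i * x i) := by
    constructor
    · intro x y; simp [mul_add, Finset.sum_add_distrib]
    · intro c x; simp [Finset.mul_sum]; exact Finset.sum_congr rfl fun i _ => by ring
  have hconv : Convex ℝ {α ∈ stdSimplex ℝ (Fin n) | ∑ i, r i * α i ≤ 0} :=
    (convex_stdSimplex ℝ (Fin n)).inter (convex_halfSpace_le hlin 0)
  ext x
  simp only [Set.mem_setOf_eq]
  constructor
  · rintro ⟨hxs, hxle⟩
    -- decompose x as a convex combination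
    classical
    set S0 : ℝ := ∑ k ∈ Finset.univ.erase j, r k * x k with hS0
    have hsplit : ∑ i, r i * x i = r j * x j + S0 := by
      exact (Finset.add_sum_erase _ _ (Finset.mem_univ j)).symm
    have hS0nonneg : 0 ≤ S0 := by
      apply Finset.sum_nonneg
      intro k hk
      exact mul_nonneg (hpos k (Finset.ne_of_mem_erase hk)) (hxs.1 k)
    set w : Fin n → ℝ := fun i => if i = j then x j - S0 / B else x i * (r i - r j) / B
      with hw
    set v : Fin n → (Fin n → ℝ) := fun i => if i = j then e j else p i with hv
    have hwj : w j = x j - S0 / B := by simp [hw]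
    have hwi : ∀ i, i ≠ j → w i = x i * (r i - r j) / B := fun i hi => by simp [hw, hi]
    have hw_nonneg : ∀ i, 0 ≤ w i := by
      intro i
      by_cases hi : i = j
      · rw [show w i = x j - S0 / B from by simp [hw, hi], sub_nonneg,
          div_le_iff₀ hBpos]
        have h0 : r j * x j + S0 ≤ 0 := by rw [← hsplit]; exact hxle
        rw [hBdef]; nlinarith
      · rw [hwi i hi]
        exact div_nonneg (mul_nonneg (hxs.1 i) (hd i hi).le) hBpos.le
    have hw_sum : ∑ i, w i = 1 := by
      rw [← Finset.add_sum_erase _ _ (Finset.mem_univ j), hwj]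
      have : ∀ i ∈ Finset.univ.erase j, w i = r i * x i / B + x i := by
        intro i hi
        have hi' := Finset.ne_of_mem_erase hi
        rw [hwi i hi', hBdef]
        field_simp [hrjne]
        ring
      rw [Finset.sum_congr rfl this, Finset.sum_add_distrib, ← Finset.sum_div, ← hS0]
      have hx1 : ∑ i, x i = 1 := hxs.2
      rw [← Finset.add_sum_erase _ _ (Finset.mem_univ j)] at hx1
      linarith [hx1]
    have hv_mem : ∀ i, v i ∈
        ({e j} ∪ {y | ∃ i, i ≠ j ∧ 0 < r i ∧ y = p i} ∪
          ⋃ i ∈ {i | i ≠ j ∧ r i = 0}, segment ℝ (e j) (e i)) := by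
      intro i
      by_cases hi : i = j
      · left; left; simp [hv, hi]
      · rcases lt_or_eq_of_le (hpos i hi) with hri | hri
        · left; right; exact ⟨i, hi, hri, by simp [hv, hi]⟩
        · right
          have hpi : p i = e i := by
            rw [hpeq, ← hri, show (0:ℝ) - r j = B from by rw [hBdef]; ring]
            simp [hBne]
          refine Set.mem_biUnion (show i ∈ {i | i ≠ j ∧ r i = 0} from ⟨hi, hri.symm⟩) ?_
          rw [show v i = e i by simp [hv, hi, hpi]]
          exact right_mem_segment ℝ (e j) (e i)
    have hxeq : x = ∑ i, w i • v i := by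
      have key : ∀ i ∈ Finset.univ.erase j, w i • v i
          = (x i * r i / B) • e j + (x i) • e i := by
        intro i hi
        have hi' := Finset.ne_of_mem_erase hi
        have hdi := hd i hi'
        have hdine : r i - r j ≠ 0 := ne_of_gt hdi
        rw [show v i = p i by simp [hv, hi'], hpeq, hwi i hi', smul_add, smul_smul, smul_smul]
        congr 1
        · congr 1; field_simp [hrjne]
        · congr 1; rw [hBdef]; field_simp [hrjne]
      rw [← Finset.add_sum_erase _ _ (Finset.mem_univ j),
        Finset.sum_congr rfl key, Finset.sum_add_distrib, ← Finset.sum_smul]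
      have hsum0 : ∑ i ∈ Finset.univ.erase j, x i * r i / B = S0 / B := by
        rw [hS0, ← Finset.sum_div]
        congr 1
        exact Finset.sum_congr rfl fun i _ => by ring
      rw [hsum0, show v j = e j by simp [hv], hwj]
      have : (x j - S0 / B) • e j + ((S0 / B) • e j + ∑ i ∈ Finset.univ.erase j, x i • e i)
          = x j • e j + ∑ i ∈ Finset.univ.erase j, x i • e i := by
        rw [← add_assoc, ← add_smul]; ring_nf
      rw [this, Finset.add_sum_erase _ (fun i => x i • e i) (Finset.mem_univ j)]
      funext k
      simp [heq, Finset.sum_apply, Pi.single_apply]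
    rw [hxeq, ← Finset.centerMass_eq_of_sum_1 _ v hw_sum]
    exact Finset.centerMass_mem_convexHull _ (fun i _ => hw_nonneg i)
      (by rw [hw_sum]; norm_num) (fun i _ => hv_mem i)
  · intro hx
    refine convexHull_min ?_ hconv hx
    rintro y (⟨rfl | ⟨i, hi, hri, rfl⟩⟩ | hy)
    · exact ⟨he_mem j, by rw [hesum]; linarith⟩
    · exact ⟨hp_std i hi, le_of_eq (hp_sum i hi)⟩
    · simp only [Set.mem_setOf_eq, Set.mem_iUnion] at hy
      obtain ⟨i, ⟨hi, hri0⟩, hyseg⟩ := hy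
      exact hconv.segment_subset ⟨he_mem j, by rw [hesum]; linarith⟩
        ⟨he_mem i, by rw [hesum, hri0]⟩ hyseg
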